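/- Let n ≥ 2 and let M = [m_{ij}] be an n×n real B-Nekrasov matrix with decomposition M = B⁺ + C, where B⁺ = [b_{ij}]. Then for every diagonal matrix D = diag(d_1,…,d_n) with 0 ≤ d_i ≤ 1 for all i, the matrix I − D + DM is invertible and ‖(I − D + DM)^{-1}‖_∞ ≤ max_{1 ≤ i ≤ n} (n − 1) η_i(B⁺)/min{b_{ii} − h_i(B⁺), 1}. -/

import Mathlib

open Finset

noncomputable def nekH {n : ℕ} {𝕜 : Type*} [RCLike 𝕜] (A : Matrix (Fin n) (Fin n) 𝕜) : Fin n → ℝ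
  | i =>
    (∑ j : Fin n, if h : j < i then ‖A i j‖ / ‖A j j‖ * nekH A j else 0)
      + ∑ j : Fin n, if i < j then ‖A i j‖ else 0
termination_by i => i.val
decreasing_by exact h

def IsNekrasov {n : ℕ} {𝕜 : Type*} [RCLike 𝕜] (A : Matrix (Fin n) (Fin n) 𝕜) : Prop :=
  ∀ i, nekH A i < ‖A i i‖

noncomputable def nekZ {n : ℕ} {𝕜 : Type*} [RCLike 𝕜] (A : Matrix (Fin n) (Fin n) 𝕜) : Fin n → ℝ
  | i => (∑ j : Fin n, if h : j < i then ‖A i j‖ / ‖A j j‖ * nekZ A j else 0) + 1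
termination_by i => i.val
decreasing_by exact h

noncomputable def nekEta {n : ℕ} {𝕜 : Type*} [RCLike 𝕜] (M : Matrix (Fin n) (Fin n) 𝕜) : Fin n → ℝ
  | i => (∑ j : Fin n, if h : j < i then ‖M i j‖ / min ‖M j j‖ 1 * nekEta M j else 0) + 1
termination_by i => i.val
decreasing_by exact h

noncomputable def linftyNorm {n : ℕ} {𝕜 : Type*} [RCLike 𝕜] (A : Matrix (Fin n) (Fin n) 𝕜) : ℝ :=
  ⨆ i, ∑ j, ‖A i j‖

noncomputable def rPlus {n : ℕ} (M : Matrix (Fin n) (Fin n) ℝ) (i : Fin n) : ℝ :=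
  Finset.fold max 0 (fun j => M i j) (Finset.univ.erase i)

noncomputable def BPlus {n : ℕ} (M : Matrix (Fin n) (Fin n) ℝ) : Matrix (Fin n) (Fin n) ℝ :=
  Matrix.of fun i j => M i j - rPlus M i

def IsBNekrasov {n : ℕ} (M : Matrix (Fin n) (Fin n) ℝ) : Prop :=
  IsNekrasov (BPlus M) ∧ ∀ i, 0 < BPlus M i i

def IsLCPSolution {n : ℕ} (M : Matrix (Fin n) (Fin n) ℝ) (q x : Fin n → ℝ) : Prop :=
  (∀ i, 0 ≤ x i) ∧ (∀ i, 0 ≤ (M.mulVec x + q) i) ∧ ∑ i, (M.mulVec x + q) i * x i = 0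

def IsPMatrix {n : ℕ} (M : Matrix (Fin n) (Fin n) ℝ) : Prop :=
  ∀ S : Finset (Fin n), 0 < (M.submatrix (fun i : S => (i : Fin n)) (fun j : S => (j : Fin n))).det


/-!
Write `A = I - D + D B⁺`, so that `I - D + DM = A + D r⁺ 1ᵀ`. Passing from `B⁺` to `A` only
improves the Nekrasov data: `h_i(A) ≤ d_i h_i(B⁺)`, `z_i(A) ≤ η_i(B⁺)` (with `z = nekZ`) and
`a_ii - h_i(A) ≥ min (b_ii - h_i(B⁺)) 1`. Hence for `ε = 1/K`, `K = max_i η_i / min (b_ii - h_i) 1`,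
the column scaling `w_j = (h_j(A) + ε z_j(A)) / a_jj` lies in `(0, 1]` and makes `A diag(w)` a
Z-matrix whose row sums are at least `ε`, so `A⁻¹ ≥ 0` with row sums at most `K`. Finally
`A + D r⁺ 1ᵀ = A (I + u 1ᵀ)` with `u = A⁻¹ D r⁺ ≥ 0`, and `(I + u 1ᵀ)⁻¹ = I - u 1ᵀ / (1 + ∑ u)`
has absolute row sums at most `n - 1`.
-/

open Matrix

section Nekrasov

variable {n : ℕ} {𝕜 : Type*} [RCLike 𝕜] (A : Matrix (Fin n) (Fin n) 𝕜)

lemma nekH_eq (i : Fin n) : nekH A i =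
    (∑ j, if j < i then ‖A i j‖ / ‖A j j‖ * nekH A j else 0) +
      ∑ j, if i < j then ‖A i j‖ else 0 := by
  rw [nekH]
  simp only [dite_eq_ite]

lemma nekZ_eq (i : Fin n) :
    nekZ A i = (∑ j, if j < i then ‖A i j‖ / ‖A j j‖ * nekZ A j else 0) + 1 := by
  rw [nekZ]
  simp only [dite_eq_ite]

lemma nekH_nonneg (i : Fin n) : 0 ≤ nekH A i := by
  induction i using WellFoundedLT.induction with
  | ind i ih =>
    rw [nekH_eq]
    refine add_nonneg (sum_nonneg fun j _ => ?_) (sum_nonneg fun j _ => ?_)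
    · split_ifs with hj
      · exact mul_nonneg (by positivity) (ih j hj)
      · exact le_rfl
    · split_ifs <;> positivity

lemma one_le_nekZ (i : Fin n) : 1 ≤ nekZ A i := by
  induction i using WellFoundedLT.induction with
  | ind i ih =>
    rw [nekZ_eq]
    refine le_add_of_nonneg_left (sum_nonneg fun j _ => ?_)
    split_ifs with hj
    · exact mul_nonneg (by positivity) (zero_le_one.trans (ih j hj))
    · exact le_rfl

lemma one_le_nekEta (i : Fin n) : 1 ≤ nekEta A i := by
  induction i using WellFoundedLT.induction with
  | ind i ih =>
    rw [nekEta]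
    refine le_add_of_nonneg_left (sum_nonneg fun j _ => ?_)
    split_ifs with hj
    · exact mul_nonneg (by positivity) (zero_le_one.trans (ih j hj))
    · exact le_rfl

lemma sum_erase_eq_sum_lt_add_sum_gt {ι M : Type*} [Fintype ι] [LinearOrder ι]
    [AddCommMonoid M] (i : ι) (g : ι → M) :
    ∑ j ∈ univ.erase i, g j =
      (∑ j, if j < i then g j else 0) + ∑ j, if i < j then g j else 0 := by
  rw [← sum_add_distrib, ← filter_ne', sum_filter]
  refine sum_congr rfl fun j _ => ?_
  rcases lt_trichotomy j i with h | rfl | h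
  · simp [h.ne, h, h.not_gt]
  · simp
  · simp [h.ne', h, h.not_gt]

noncomputable def nekScaling (ε : ℝ) (j : Fin n) : ℝ :=
  (nekH A j + ε * nekZ A j) / ‖A j j‖

lemma sum_norm_mul_nekScaling_add_le (ε : ℝ) (i : Fin n) (hAi : A i i ≠ 0)
    (hw : ∀ j, i < j → nekScaling A ε j ≤ 1) :
    ∑ j ∈ univ.erase i, ‖A i j‖ * nekScaling A ε j + ε ≤
      ‖A i i‖ * nekScaling A ε i := by
  have hlower : (∑ j, if j < i then ‖A i j‖ * nekScaling A ε j else 0) =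
      (∑ j, if j < i then ‖A i j‖ / ‖A j j‖ * nekH A j else 0) +
        ε * ∑ j, if j < i then ‖A i j‖ / ‖A j j‖ * nekZ A j else 0 := by
    rw [mul_sum, ← sum_add_distrib]
    refine sum_congr rfl fun j _ => ?_
    split_ifs
    · rw [nekScaling]; ring
    · ring
  have hupper : (∑ j, if i < j then ‖A i j‖ * nekScaling A ε j else 0) ≤
      ∑ j, if i < j then ‖A i j‖ else 0 := by
    refine sum_le_sum fun j _ => ?_
    split_ifs with hj
    · exact mul_le_of_le_one_right (norm_nonneg _) (hw j hj)
    · exact le_rfl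
  have hdiag : ‖A i i‖ * nekScaling A ε i = nekH A i + ε * nekZ A i :=
    mul_div_cancel₀ _ (norm_ne_zero_iff.mpr hAi)
  rw [sum_erase_eq_sum_lt_add_sum_gt, hlower, hdiag, nekH_eq A i, nekZ_eq A i]
  linarith

end Nekrasov

section ZMatrix

variable {ι : Type*} [Fintype ι]

def IsZMatrix (B : Matrix ι ι ℝ) : Prop := ∀ i j, i ≠ j → B i j ≤ 0

namespace IsZMatrix

variable {B : Matrix ι ι ℝ}

lemma sum_row_mul_le_mulVec (hB : IsZMatrix B) {x : ι → ℝ} {k : ι} (hk : ∀ j, x j ≤ x k) :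
    (∑ j, B k j) * x k ≤ (B *ᵥ x) k := by
  rw [mulVec, dotProduct, sum_mul, ← sub_nonneg, ← sum_sub_distrib]
  refine sum_nonneg fun j _ => ?_
  rcases eq_or_ne k j with rfl | hkj
  · simp
  · nlinarith [hB k j hkj, hk j]

lemma mulVec_le_sum_row_mul (hB : IsZMatrix B) {x : ι → ℝ} {k : ι} (hk : ∀ j, x k ≤ x j) :
    (B *ᵥ x) k ≤ (∑ j, B k j) * x k := by
  simpa [mulVec_neg] using hB.sum_row_mul_le_mulVec (x := -x) (k := k) (by simpa using hk)

lemma nonneg_of_mulVec_nonneg (hB : IsZMatrix B) (hrow : ∀ i, 0 < ∑ j, B i j) {x : ι → ℝ}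
    (hx : ∀ i, 0 ≤ (B *ᵥ x) i) (i : ι) : 0 ≤ x i := by
  by_contra! hi
  have : Nonempty ι := ⟨i⟩
  obtain ⟨k, hk⟩ := Finite.exists_min x
  have hxk : x k < 0 := (hk i).trans_lt hi
  linarith [hB.mulVec_le_sum_row_mul hk, hx k, mul_neg_of_pos_of_neg (hrow k) hxk]

variable [DecidableEq ι]

lemma det_ne_zero (hB : IsZMatrix B) (hrow : ∀ i, 0 < ∑ j, B i j) : B.det ≠ 0 := by
  intro h
  obtain ⟨v, hv, hBv⟩ := exists_mulVec_eq_zero_iff.mpr h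
  refine hv (funext fun i => le_antisymm ?_ (hB.nonneg_of_mulVec_nonneg hrow (by simp [hBv]) i))
  simpa using hB.nonneg_of_mulVec_nonneg hrow (x := -v) (by simp [mulVec_neg, hBv]) i

lemma inv_nonneg (hB : IsZMatrix B) (hrow : ∀ i, 0 < ∑ j, B i j) (i j : ι) :
    0 ≤ B⁻¹ i j := by
  have hinv : B * B⁻¹ = 1 := mul_nonsing_inv _ (isUnit_iff_ne_zero.mpr (hB.det_ne_zero hrow))
  refine hB.nonneg_of_mulVec_nonneg hrow (x := fun i => B⁻¹ i j) (fun k => ?_) i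
  have hcol : (B *ᵥ fun i => B⁻¹ i j) k = (1 : Matrix ι ι ℝ) k j := by
    rw [← hinv, mul_apply]
    rfl
  rw [hcol, one_apply]
  split_ifs <;> norm_num

lemma sum_inv_apply_le (hB : IsZMatrix B) {ε : ℝ} (hε : 0 < ε)
    (hrow : ∀ i, ε ≤ ∑ j, B i j) (i : ι) : ∑ j, B⁻¹ i j ≤ ε⁻¹ := by
  have hrow' : ∀ i, 0 < ∑ j, B i j := fun i => hε.trans_le (hrow i)
  have hinv : B * B⁻¹ = 1 := mul_nonsing_inv _ (isUnit_iff_ne_zero.mpr (hB.det_ne_zero hrow'))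
  set x := B⁻¹ *ᵥ fun _ => 1 with hx
  have hBx : B *ᵥ x = fun _ => 1 := by rw [hx, mulVec_mulVec, hinv, one_mulVec]
  have hsum : ∑ j, B⁻¹ i j = x i := by simp [hx, mulVec, dotProduct]
  have : Nonempty ι := ⟨i⟩
  obtain ⟨k, hk⟩ := Finite.exists_max x
  have hxk : 0 ≤ x k := hB.nonneg_of_mulVec_nonneg hrow' (by simp [hBx]) k
  have hεk : ε * x k ≤ 1 := by
    have := hB.sum_row_mul_le_mulVec hk
    rw [hBx] at this
    nlinarith [hrow k]
  rw [hsum, ← one_div, le_div_iff₀' hε]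
  exact (mul_le_mul_of_nonneg_left (hk i) hε.le).trans hεk

lemma mul_diagonal (hB : IsZMatrix B) {w : ι → ℝ} (hw : ∀ i, 0 ≤ w i) :
    IsZMatrix (B * diagonal w) := fun i j hij => by
  rw [Matrix.mul_diagonal]
  exact mul_nonpos_of_nonpos_of_nonneg (hB i j hij) (hw j)

lemma inv_bounds_of_le_mulVec (hB : IsZMatrix B) {w : ι → ℝ}
    (hw : ∀ i, 0 < w i ∧ w i ≤ 1) {ε : ℝ} (hε : 0 < ε)
    (hBw : ∀ i, ε ≤ (B *ᵥ w) i) :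
    IsUnit B.det ∧ (∀ i j, 0 ≤ B⁻¹ i j) ∧ ∀ i, ∑ j, B⁻¹ i j ≤ ε⁻¹ := by
  set C := B * diagonal w
  have hC : IsZMatrix C := hB.mul_diagonal fun i => (hw i).1.le
  have hrow : ∀ i, ε ≤ ∑ j, C i j := fun i => by simpa [C, mulVec, dotProduct] using hBw i
  have hrow' : ∀ i, 0 < ∑ j, C i j := fun i => hε.trans_le (hrow i)
  have hright : B * (diagonal w * C⁻¹) = 1 := by
    rw [← Matrix.mul_assoc, mul_nonsing_inv _ (isUnit_iff_ne_zero.mpr (hC.det_ne_zero hrow'))]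
  have hinv : ∀ i j, B⁻¹ i j = w i * C⁻¹ i j := fun i j => by
    rw [inv_eq_right_inv hright, diagonal_mul]
  refine ⟨isUnit_det_of_right_inverse hright,
    fun i j => hinv i j ▸ mul_nonneg (hw i).1.le (hC.inv_nonneg hrow' i j), fun i => ?_⟩
  have hsum_nonneg : 0 ≤ ∑ j, C⁻¹ i j := sum_nonneg fun j _ => hC.inv_nonneg hrow' i j
  calc ∑ j, B⁻¹ i j = w i * ∑ j, C⁻¹ i j := by simp only [hinv, mul_sum]
    _ ≤ ∑ j, C⁻¹ i j := mul_le_of_le_one_left hsum_nonneg (hw i).2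
    _ ≤ ε⁻¹ := hC.sum_inv_apply_le hε hrow i

end IsZMatrix

end ZMatrix

section RankOne

variable {ι : Type*} [Fintype ι]

lemma sum_norm_mul_apply_le {R : Type*} [SeminormedRing R] (G H : Matrix ι ι R) {K : ℝ}
    (hH : ∀ k, ∑ j, ‖H k j‖ ≤ K) (i : ι) :
    ∑ j, ‖(G * H) i j‖ ≤ (∑ k, ‖G i k‖) * K :=
  calc ∑ j, ‖(G * H) i j‖ ≤ ∑ j, ∑ k, ‖G i k‖ * ‖H k j‖ :=
        sum_le_sum fun j _ => (norm_sum_le _ _).trans (sum_le_sum fun k _ => norm_mul_le _ _)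
    _ = ∑ k, ‖G i k‖ * ∑ j, ‖H k j‖ := by rw [sum_comm]; simp only [mul_sum]
    _ ≤ ∑ k, ‖G i k‖ * K :=
        sum_le_sum fun k _ => mul_le_mul_of_nonneg_left (hH k) (norm_nonneg _)
    _ = (∑ k, ‖G i k‖) * K := (sum_mul _ _ _).symm

variable [DecidableEq ι]

lemma one_add_replicateCol_mul_one_sub_smul {F : Type*} [Field F] (u : ι → F)
    (hu : 1 + ∑ i, u i ≠ 0) :
    (1 + replicateCol ι u) * (1 - (1 + ∑ i, u i)⁻¹ • replicateCol ι u) = 1 := by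
  set E := replicateCol ι u
  have hEE : E * E = (∑ i, u i) • E := by
    ext i j
    simp only [E, mul_apply, replicateCol_apply, Matrix.smul_apply, smul_eq_mul, ← mul_sum]
    ring
  rw [add_mul, one_mul, mul_sub, mul_one, Matrix.mul_smul, hEE, smul_smul,
    show 1 - (1 + ∑ i, u i)⁻¹ • E + (E - ((1 + ∑ i, u i)⁻¹ * ∑ i, u i) • E)
      = 1 + (1 - (1 + ∑ i, u i)⁻¹ * (1 + ∑ i, u i)) • E by module,
    inv_mul_cancel₀ hu, sub_self, zero_smul, add_zero]

lemma sum_norm_one_sub_replicateCol_le (hn : 2 ≤ Fintype.card ι) {t : ι → ℝ}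
    (ht : ∀ i, 0 ≤ t i ∧ t i ≤ 1) (i : ι) :
    ∑ j, ‖(1 - replicateCol ι t) i j‖ ≤ Fintype.card ι - 1 := by
  have hentry : ∀ j, ‖(1 - replicateCol ι t) i j‖ = if j = i then 1 - t i else t i :=
      fun j => by
    rcases eq_or_ne j i with rfl | hji
    · simp [abs_of_nonneg (sub_nonneg.mpr (ht j).2)]
    · simp [one_apply_ne hji.symm, hji, abs_of_nonneg (ht i).1]
  rw [← add_sum_erase _ _ (mem_univ i), hentry, if_pos rfl,
    sum_congr rfl fun j hj => by rw [hentry, if_neg (ne_of_mem_erase hj)], sum_const,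
    card_erase_of_mem (mem_univ i), card_univ, nsmul_eq_mul, Nat.cast_sub (by omega),
    Nat.cast_one]
  have hn' : (2 : ℝ) ≤ Fintype.card ι := by exact_mod_cast hn
  nlinarith [ht i]

lemma inv_bounds_add_replicateCol (hn : 2 ≤ Fintype.card ι) {A : Matrix ι ι ℝ}
    (hA : IsUnit A.det) (hAinv : ∀ i j, 0 ≤ A⁻¹ i j) {K : ℝ}
    (hK : ∀ i, ∑ j, A⁻¹ i j ≤ K)
    {v : ι → ℝ} (hv : ∀ i, 0 ≤ v i) :
    IsUnit (A + replicateCol ι v).det ∧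
      ∀ i, ∑ j, ‖(A + replicateCol ι v)⁻¹ i j‖ ≤ (Fintype.card ι - 1) * K := by
  set u := A⁻¹ *ᵥ v
  have hu : ∀ i, 0 ≤ u i := fun i => sum_nonneg fun j _ => mul_nonneg (hAinv i j) (hv j)
  set s := ∑ i, u i
  have hs : 0 < 1 + s := by linarith [sum_nonneg fun i (_ : i ∈ univ) => hu i]
  have hfactor : A + replicateCol ι v = A * (1 + replicateCol ι u) := by
    have hAu : A *ᵥ u = v := by rw [mulVec_mulVec, mul_nonsing_inv _ hA, one_mulVec]
    rw [Matrix.mul_add, Matrix.mul_one, ← hAu]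
    ext i j
    simp [mul_apply, mulVec, dotProduct]
  set G := 1 - (1 + s)⁻¹ • replicateCol ι u
  have hright : (A + replicateCol ι v) * (G * A⁻¹) = 1 := by
    rw [hfactor, Matrix.mul_assoc, ← Matrix.mul_assoc (1 + replicateCol ι u),
      one_add_replicateCol_mul_one_sub_smul u hs.ne', Matrix.one_mul, mul_nonsing_inv _ hA]
  refine ⟨isUnit_det_of_right_inverse hright, fun i => ?_⟩
  have hG : G = 1 - replicateCol ι fun i => (1 + s)⁻¹ * u i := by
    ext i j
    simp [G]
  have ht : ∀ i, 0 ≤ (1 + s)⁻¹ * u i ∧ (1 + s)⁻¹ * u i ≤ 1 := fun i =>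
    ⟨mul_nonneg (inv_nonneg.mpr hs.le) (hu i), by
      rw [inv_mul_le_one₀ hs]
      linarith [single_le_sum (fun j _ => hu j) (mem_univ i)]⟩
  have hK0 : 0 ≤ K := (sum_nonneg fun j _ => hAinv i j).trans (hK i)
  rw [inv_eq_right_inv hright]
  refine (sum_norm_mul_apply_le G A⁻¹ (K := K) (fun k => ?_) i).trans ?_
  · simpa only [Real.norm_of_nonneg (hAinv _ _)] using hK k
  · exact mul_le_mul_of_nonneg_right (hG ▸ sum_norm_one_sub_replicateCol_le hn ht i) hK0

end RankOne

lemma min_le_one_sub_add_mul (x : ℝ) {t : ℝ} (ht : 0 ≤ t ∧ t ≤ 1) :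
    min x 1 ≤ 1 - t + t * x := by
  nlinarith [min_le_left x 1, min_le_right x 1]

section LCP

variable {n : ℕ}

noncomputable def lcpMatrix (d : Fin n → ℝ) (M : Matrix (Fin n) (Fin n) ℝ) :
    Matrix (Fin n) (Fin n) ℝ :=
  1 - diagonal d + diagonal d * M

lemma lcpMatrix_apply_self (d : Fin n → ℝ) (M : Matrix (Fin n) (Fin n) ℝ) (i : Fin n) :
    lcpMatrix d M i i = 1 - d i + d i * M i i := by
  simp [lcpMatrix, diagonal_mul]

lemma lcpMatrix_apply_of_ne (d : Fin n → ℝ) (M : Matrix (Fin n) (Fin n) ℝ) {i j : Fin n}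
    (h : i ≠ j) : lcpMatrix d M i j = d i * M i j := by
  simp [lcpMatrix, diagonal_mul, one_apply_ne h, h]

lemma lcpMatrix_add_replicateCol (d : Fin n → ℝ) (M : Matrix (Fin n) (Fin n) ℝ)
    (r : Fin n → ℝ) :
    lcpMatrix d (M + replicateCol (Fin n) r) =
      lcpMatrix d M + replicateCol (Fin n) fun i => d i * r i := by
  ext i j
  simp only [lcpMatrix, Matrix.mul_add, Matrix.add_apply, Matrix.sub_apply, diagonal_mul,
    replicateCol_apply]
  ring

variable {d : Fin n → ℝ} {b : Matrix (Fin n) (Fin n) ℝ}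

lemma norm_lcpMatrix_apply_of_ne (hd : ∀ i, 0 ≤ d i ∧ d i ≤ 1) {i j : Fin n} (h : i ≠ j) :
    ‖lcpMatrix d b i j‖ = d i * ‖b i j‖ := by
  rw [lcpMatrix_apply_of_ne d b h, norm_mul, Real.norm_of_nonneg (hd i).1]

lemma isZMatrix_lcpMatrix (hd : ∀ i, 0 ≤ d i ∧ d i ≤ 1) (hb : IsZMatrix b) :
    IsZMatrix (lcpMatrix d b) := fun i j h => by
  rw [lcpMatrix_apply_of_ne d b h]
  exact mul_nonpos_of_nonneg_of_nonpos (hd i).1 (hb i j h)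

lemma min_le_lcpMatrix_apply_self (hd : ∀ i, 0 ≤ d i ∧ d i ≤ 1) (i : Fin n) :
    min (b i i) 1 ≤ lcpMatrix d b i i :=
  lcpMatrix_apply_self d b i ▸ min_le_one_sub_add_mul _ (hd i)

lemma lcpMatrix_apply_self_pos (hd : ∀ i, 0 ≤ d i ∧ d i ≤ 1) (hb : ∀ i, 0 < b i i)
    (i : Fin n) : 0 < lcpMatrix d b i i :=
  (lt_min (hb i) one_pos).trans_le (min_le_lcpMatrix_apply_self hd i)

lemma nekH_lcpMatrix_le (hd : ∀ i, 0 ≤ d i ∧ d i ≤ 1) (hb : ∀ i, 0 < b i i) (i : Fin n) :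
    nekH (lcpMatrix d b) i ≤ d i * nekH b i := by
  induction i using WellFoundedLT.induction with
  | ind i ih =>
    set A := lcpMatrix d b
    rw [nekH_eq, nekH_eq b, mul_add, mul_sum, mul_sum]
    refine add_le_add (sum_le_sum fun j _ => ?_) (sum_le_sum fun j _ => ?_)
    · split_ifs with hj
      · have hAj := lcpMatrix_apply_self_pos hd hb j
        have hratio : nekH A j / A j j ≤ nekH b j / b j j := by
          rw [div_le_div_iff₀ hAj (hb j), lcpMatrix_apply_self]
          nlinarith [mul_le_mul_of_nonneg_right (ih j hj) (hb j).le,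
            mul_nonneg (sub_nonneg.mpr (hd j).2) (nekH_nonneg b j)]
        calc ‖A i j‖ / ‖A j j‖ * nekH A j = d i * ‖b i j‖ * (nekH A j / A j j) := by
              rw [norm_lcpMatrix_apply_of_ne hd hj.ne', Real.norm_of_nonneg hAj.le]; ring
          _ ≤ d i * ‖b i j‖ * (nekH b j / b j j) := by
              gcongr; exact mul_nonneg (hd i).1 (norm_nonneg _)
          _ = d i * (‖b i j‖ / ‖b j j‖ * nekH b j) := by
              rw [Real.norm_of_nonneg (hb j).le]; ring
      · simp
    · split_ifs with hj
      · exact (norm_lcpMatrix_apply_of_ne hd hj.ne).le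
      · simp

lemma nekZ_lcpMatrix_le_nekEta (hd : ∀ i, 0 ≤ d i ∧ d i ≤ 1) (hb : ∀ i, 0 < b i i)
    (i : Fin n) : nekZ (lcpMatrix d b) i ≤ nekEta b i := by
  induction i using WellFoundedLT.induction with
  | ind i ih =>
    set A := lcpMatrix d b
    rw [nekZ_eq, nekEta]
    refine add_le_add_left (sum_le_sum fun j _ => ?_) 1
    split_ifs with hj
    · have hAj := lcpMatrix_apply_self_pos hd hb j
      have hratio : nekZ A j / A j j ≤ nekEta b j / min ‖b j j‖ 1 := by
        rw [Real.norm_of_nonneg (hb j).le]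
        exact div_le_div₀ (zero_le_one.trans (one_le_nekEta b j)) (ih j hj)
          (lt_min (hb j) one_pos) (min_le_lcpMatrix_apply_self hd j)
      calc ‖A i j‖ / ‖A j j‖ * nekZ A j = ‖A i j‖ * (nekZ A j / A j j) := by
            rw [Real.norm_of_nonneg hAj.le]; ring
        _ ≤ ‖b i j‖ * (nekEta b j / min ‖b j j‖ 1) := by
            rw [norm_lcpMatrix_apply_of_ne hd hj.ne']
            gcongr
            · exact div_nonneg (zero_le_one.trans (one_le_nekZ A j)) hAj.le
            · exact mul_le_of_le_one_left (norm_nonneg _) (hd i).2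
        _ = ‖b i j‖ / min ‖b j j‖ 1 * nekEta b j := by ring
    · exact le_rfl

lemma min_le_lcpMatrix_apply_self_sub_nekH (hd : ∀ i, 0 ≤ d i ∧ d i ≤ 1)
    (hb : ∀ i, 0 < b i i) (i : Fin n) :
    min (b i i - nekH b i) 1 ≤ lcpMatrix d b i i - nekH (lcpMatrix d b) i := by
  have := nekH_lcpMatrix_le hd hb i
  have := min_le_one_sub_add_mul (b i i - nekH b i) (hd i)
  rw [lcpMatrix_apply_self]
  linarith

lemma lcpMatrix_inv_bounds (hd : ∀ i, 0 ≤ d i ∧ d i ≤ 1) (hbZ : IsZMatrix b)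
    (hb : ∀ i, 0 < b i i) {K : ℝ} (hK0 : 0 < K)
    (hK : ∀ i, nekEta b i ≤ K * min (b i i - nekH b i) 1) :
    IsUnit (lcpMatrix d b).det ∧ (∀ i j, 0 ≤ (lcpMatrix d b)⁻¹ i j) ∧
      ∀ i, ∑ j, (lcpMatrix d b)⁻¹ i j ≤ K := by
  set A := lcpMatrix d b
  set w := nekScaling A K⁻¹
  have hA : IsZMatrix A := isZMatrix_lcpMatrix hd hbZ
  have hAii : ∀ i, 0 < A i i := lcpMatrix_apply_self_pos hd hb
  have hw : ∀ j, 0 < w j ∧ w j ≤ 1 := fun j => by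
    have hz : nekZ A j ≤ nekEta b j := nekZ_lcpMatrix_le_nekEta hd hb j
    have hgap : min (b j j - nekH b j) 1 ≤ A j j - nekH A j :=
      min_le_lcpMatrix_apply_self_sub_nekH hd hb j
    have hη : K⁻¹ * nekEta b j ≤ min (b j j - nekH b j) 1 :=
      (inv_mul_le_iff₀ hK0).mpr (hK j)
    have hK0' : 0 < K⁻¹ := inv_pos.mpr hK0
    simp only [w, nekScaling, Real.norm_of_nonneg (hAii j).le]
    refine ⟨div_pos (add_pos_of_nonneg_of_pos (nekH_nonneg A j)
      (mul_pos hK0' (one_pos.trans_le (one_le_nekZ A j)))) (hAii j), ?_⟩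
    rw [div_le_one (hAii j)]
    nlinarith
  have hAw : ∀ i, K⁻¹ ≤ (A *ᵥ w) i := fun i => by
    have hdom := sum_norm_mul_nekScaling_add_le A K⁻¹ i (hAii i).ne' fun j _ => (hw j).2
    have hoff :
        ∑ j ∈ univ.erase i, A i j * w j = -∑ j ∈ univ.erase i, ‖A i j‖ * w j := by
      rw [← sum_neg_distrib]
      refine sum_congr rfl fun j hj => ?_
      rw [Real.norm_of_nonpos (hA i j (ne_of_mem_erase hj).symm)]
      ring
    rw [Real.norm_of_nonneg (hAii i).le] at hdom
    rw [mulVec, dotProduct, ← add_sum_erase _ _ (mem_univ i), hoff]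
    linarith
  simpa using hA.inv_bounds_of_le_mulVec hw (inv_pos.mpr hK0) hAw

end LCP

section BPlus

variable {n : ℕ} (M : Matrix (Fin n) (Fin n) ℝ)

lemma rPlus_nonneg (i : Fin n) : 0 ≤ rPlus M i :=
  (le_fold_max 0).mpr (Or.inl le_rfl)

lemma le_rPlus {i j : Fin n} (h : i ≠ j) : M i j ≤ rPlus M i :=
  (le_fold_max (M i j)).mpr (Or.inr ⟨j, mem_erase.mpr ⟨h.symm, mem_univ j⟩, le_rfl⟩)

lemma isZMatrix_BPlus : IsZMatrix (BPlus M) := fun _ _ h =>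
  sub_nonpos.mpr (le_rPlus M h)

lemma BPlus_add_replicateCol_rPlus : BPlus M + replicateCol (Fin n) (rPlus M) = M := by
  ext i j
  simp [BPlus]

end BPlus

theorem stmt12 {n : ℕ} (hn : 2 ≤ n) (M : Matrix (Fin n) (Fin n) ℝ)
    (hBN : IsBNekrasov M)
    (d : Fin n → ℝ) (hd : ∀ i, 0 ≤ d i ∧ d i ≤ 1) :
    IsUnit (1 - Matrix.diagonal d + Matrix.diagonal d * M).det ∧
      linftyNorm (1 - Matrix.diagonal d + Matrix.diagonal d * M)⁻¹ ≤
        Finset.univ.sup' ⟨⟨0, by omega⟩, Finset.mem_univ _⟩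
          (fun i => (n - 1 : ℝ) * nekEta (BPlus M) i /
            min (BPlus M i i - nekH (BPlus M) i) 1) := by
  obtain ⟨hNek, hpos⟩ := hBN
  set b := BPlus M
  set f : Fin n → ℝ := fun i => (n - 1 : ℝ) * nekEta b i / min (b i i - nekH b i) 1
  set S := Finset.univ.sup' ⟨⟨0, by omega⟩, Finset.mem_univ _⟩ f
  have hgap : ∀ i, 0 < min (b i i - nekH b i) 1 := fun i =>
    lt_min (sub_pos.mpr (Real.norm_of_nonneg (hpos i).le ▸ hNek i)) one_pos
  have hn1 : (0 : ℝ) < n - 1 := by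
    have : (2 : ℝ) ≤ n := by exact_mod_cast hn
    linarith
  have hK : ∀ i, nekEta b i ≤ S / (n - 1) * min (b i i - nekH b i) 1 := fun i => by
    rw [div_mul_eq_mul_div, le_div_iff₀' hn1, ← div_le_iff₀ (hgap i)]
    exact le_sup' f (mem_univ i)
  have hS : 0 < S := (div_pos (mul_pos hn1 (one_pos.trans_le (one_le_nekEta b _)))
    (hgap ⟨0, by omega⟩)).trans_le (le_sup' f (mem_univ _))
  obtain ⟨hunit, hinv, hrow⟩ :=
    lcpMatrix_inv_bounds hd (isZMatrix_BPlus M) hpos (div_pos hS hn1) hK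
  have hsplit : 1 - diagonal d + diagonal d * M =
      lcpMatrix d b + replicateCol (Fin n) fun i => d i * rPlus M i := by
    rw [← lcpMatrix_add_replicateCol, BPlus_add_replicateCol_rPlus]
    rfl
  obtain ⟨hunit', hrow'⟩ := inv_bounds_add_replicateCol (by simpa using hn) hunit hinv hrow
    fun i => mul_nonneg (hd i).1 (rPlus_nonneg M i)
  have : Nonempty (Fin n) := ⟨⟨0, by omega⟩⟩
  rw [hsplit]
  refine ⟨hunit', ciSup_le fun i => (hrow' i).trans_eq ?_⟩
  simp only [Fintype.card_fin]
  field_simp
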